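/- Let h: ℝ^d → (-∞,+∞] be of Legendre type, g proper closed convex with int(dom h) ∩ dom g ≠ ∅, x̄ ∈ int(dom h), and assume g is coercive and bounded below while D_h(·, x̄) is proper, closed, convex and bounded below. Then the Bregman proximal operator prox_g^h(x̄) := argmin_x { g(x) + D_h(x, x̄) } is a well-defined singleton contained in int(dom h) ∩ dom g. -/

import Mathlib

open scoped RealInnerProductSpace
open Filter Topology

variable {d : ℕ}

/-- Effective domain. -/
def edom (φ : EuclideanSpace ℝ (Fin d) → EReal) : Set (EuclideanSpace ℝ (Fin d)) :=
  {x | φ x ≠ ⊤}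

/-- Finite real-valued representative. -/
noncomputable def fin (φ : EuclideanSpace ℝ (Fin d) → EReal) :
    EuclideanSpace ℝ (Fin d) → ℝ := fun x => (φ x).toReal

/-- Essential smoothness. -/
def EssentiallySmooth (φ : EuclideanSpace ℝ (Fin d) → EReal) : Prop :=
  (interior (edom φ)).Nonempty ∧
  (∀ x ∈ interior (edom φ), DifferentiableAt ℝ (fin φ) x) ∧
  (∀ (x : ℕ → EuclideanSpace ℝ (Fin d)) (x' : EuclideanSpace ℝ (Fin d)),
    (∀ k, x k ∈ interior (edom φ)) → Tendsto x atTop (𝓝 x') →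
      x' ∈ frontier (edom φ) →
        Tendsto (fun k => ‖gradient (fin φ) (x k)‖) atTop atTop)

/-- Legendre type. -/
def LegendreType (φ : EuclideanSpace ℝ (Fin d) → EReal) : Prop :=
  EssentiallySmooth φ ∧ StrictConvexOn ℝ (interior (edom φ)) (fin φ)

/-- Convexity of an extended-real-valued function. -/
def IsConvexFn (φ : EuclideanSpace ℝ (Fin d) → EReal) : Prop :=
  ∀ x y : EuclideanSpace ℝ (Fin d), ∀ a b : ℝ, 0 ≤ a → 0 ≤ b → a + b = 1 →
    φ (a • x + b • y) ≤ (a : EReal) * φ x + (b : EReal) * φ y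

/-- The (extended-real-valued) Bregman distance `D_h(x, x̄)`. -/
noncomputable def bregmanD (h : EuclideanSpace ℝ (Fin d) → EReal)
    (x xbar : EuclideanSpace ℝ (Fin d)) : EReal :=
  h x - (((h xbar).toReal : ℝ) : EReal) -
    ((⟪gradient (fin h) xbar, x - xbar⟫ : ℝ) : EReal)

/-! The objective `F = g + D_h(·, x̄)` is lower semicontinuous and coercive, so it attains its
minimum at some `w ∈ dom g ∩ dom h`. Fix `x₀ ∈ int dom h ∩ dom g`. On `dom g ∩ dom h` we have
`F = (g - T) + h` with `T` the tangent of `h` at `x̄`, and `g - T` is convex, so minimality gives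
`h (t x₀ + (1 - t) w) ≥ h w - C t`. Since `h` is bounded above on a ball around `x₀`, the gradient
inequality at `t x₀ + (1 - t) w` then bounds `‖∇h‖` along the whole segment, which essential
smoothness forbids if `w` is a boundary point of `dom h`. On the convex set `int dom h ∩ dom g`
the function `(g - T) + h` is strictly convex, so the minimizer is unique. -/

open scoped Gradient
open Set Metric

section InnerProductSpace

variable {E : Type*} [NormedAddCommGroup E] [InnerProductSpace ℝ E]

theorem ConvexOn.add_inner_gradient_le [CompleteSpace E] {s : Set E} {f : E → ℝ}
    (hf : ConvexOn ℝ s f) {p y : E} (hp : p ∈ s) (hy : y ∈ s)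
    (hdiff : DifferentiableAt ℝ f p) :
    f p + ⟪∇ f p, y - p⟫ ≤ f y := by
  set ℓ : ℝ →ᵃ[ℝ] E := AffineMap.lineMap p y
  have hline : ConvexOn ℝ (Icc (0 : ℝ) 1) (f ∘ ℓ) :=
    (hf.comp_affineMap ℓ).subset (fun τ hτ => hf.1.lineMap_mem hp hy hτ) (convex_Icc 0 1)
  have hderiv : HasDerivAt (f ∘ ℓ) ⟪∇ f p, y - p⟫ 0 := by
    rw [inner_gradient_left]
    exact hdiff.hasFDerivAt.comp_hasDerivAt_of_eq 0 AffineMap.hasDerivAt_lineMap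
      (AffineMap.lineMap_apply_zero p y).symm
  have := hline.le_slope_of_hasDerivAt (by simp) (by simp) zero_lt_one hderiv
  simp only [slope_def_field, Function.comp_apply, ℓ, AffineMap.lineMap_apply_zero,
    AffineMap.lineMap_apply_one, sub_zero, div_one] at this
  linarith

theorem ConvexOn.sub_mul_le_of_isMinOn {s : Set E} {ψ f : E → ℝ} (hψ : ConvexOn ℝ s ψ)
    {w x : E} (hmin : IsMinOn (ψ + f) s w) (hw : w ∈ s) (hx : x ∈ s)
    {t : ℝ} (ht₀ : 0 ≤ t) (ht₁ : t ≤ 1) :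
    f w - t * (ψ x - ψ w) ≤ f (t • x + (1 - t) • w) := by
  have hmem : t • x + (1 - t) • w ∈ s := hψ.1 hx hw ht₀ (by linarith) (by ring)
  have hconv : ψ (t • x + (1 - t) • w) ≤ t * ψ x + (1 - t) * ψ w :=
    hψ.2 hx hw ht₀ (by linarith) (by ring)
  have hle : ψ w + f w ≤ ψ (t • x + (1 - t) • w) + f (t • x + (1 - t) • w) := hmin hmem
  linarith

theorem ConvexOn.mul_norm_gradient_le [CompleteSpace E] {s : Set E} {f : E → ℝ}
    (hf : ConvexOn ℝ s f) {x₀ w : E} {r M C t : ℝ} (hr : 0 ≤ r)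
    (hball : closedBall x₀ r ⊆ s) (hM : ∀ y ∈ closedBall x₀ r, f y ≤ M) (hw : w ∈ s)
    (ht₀ : 0 < t) (ht₁ : t ≤ 1) (hdiff : DifferentiableAt ℝ f (t • x₀ + (1 - t) • w))
    (hlow : f w - t * C ≤ f (t • x₀ + (1 - t) • w)) :
    r * ‖∇ f (t • x₀ + (1 - t) • w)‖ ≤ M - f w + C := by
  set p := t • x₀ + (1 - t) • w
  set G := ∇ f p
  have hscale : r / ‖G‖ * ‖G‖ ^ 2 = r * ‖G‖ := by
    rcases eq_or_ne ‖G‖ 0 with hG | hG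
    · simp [hG]
    · field_simp
  -- the point of the ball in the direction of `G` (just `x₀` if `G = 0`, as `r / 0 = 0`)
  set y := x₀ + (r / ‖G‖) • G
  have hy : y ∈ closedBall x₀ r := by
    rw [mem_closedBall, dist_eq_norm, add_sub_cancel_left, norm_smul, Real.norm_eq_abs,
      abs_of_nonneg (by positivity)]
    rcases eq_or_ne ‖G‖ 0 with hG | hG
    · simpa [hG] using hr
    · rw [div_mul_cancel₀ r hG]
  have hx₀ : x₀ ∈ s := hball (mem_closedBall_self hr)
  have hp : p ∈ s := hf.1 hx₀ hw ht₀.le (by linarith) (by ring)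
  have hz : t • y + (1 - t) • w ∈ s := hf.1 (hball hy) hw ht₀.le (by linarith) (by ring)
  have hinner : ⟪G, (t • y + (1 - t) • w) - p⟫ = t * (r * ‖G‖) := by
    have : (t • y + (1 - t) • w) - p = (t * (r / ‖G‖)) • G := by simp only [p, y]; module
    rw [this, real_inner_smul_right, real_inner_self_eq_norm_sq, mul_assoc, hscale]
  have hgrad := hf.add_inner_gradient_le hp hz hdiff
  have hconv : f (t • y + (1 - t) • w) ≤ t * f y + (1 - t) * f w :=
    hf.2 (hball hy) hw ht₀.le (by linarith) (by ring)
  have hfy : t * f y ≤ t * M := mul_le_mul_of_nonneg_left (hM y hy) ht₀.le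
  rw [hinner] at hgrad
  refine le_of_mul_le_mul_left ?_ ht₀
  linarith

noncomputable def tangent [CompleteSpace E] (f : E → ℝ) (a x : E) : ℝ :=
  f a + ⟪∇ f a, x - a⟫

theorem concaveOn_tangent [CompleteSpace E] (f : E → ℝ) (a : E) {s : Set E} (hs : Convex ℝ s) :
    ConcaveOn ℝ s (tangent f a) := by
  have : tangent f a = fun x => innerₛₗ ℝ (∇ f a) x + (f a - ⟪∇ f a, a⟫) := by
    funext x
    simp only [tangent, innerₛₗ_apply_apply, inner_sub_right]
    ring
  rw [this]
  exact ((innerₛₗ ℝ (∇ f a)).concaveOn hs).add_const _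

end InnerProductSpace

theorem exists_closedBall_subset_forall_le {E : Type*} [PseudoMetricSpace E] {f : E → ℝ}
    {x₀ : E} {U : Set E} (hf : ContinuousAt f x₀) (hU : U ∈ 𝓝 x₀) :
    ∃ r > 0, closedBall x₀ r ⊆ U ∧ ∀ y ∈ closedBall x₀ r, f y ≤ f x₀ + 1 := by
  obtain ⟨r, hr, h⟩ := nhds_basis_closedBall.eventually_iff.mp
    ((hf.eventually (gt_mem_nhds (lt_add_one (f x₀)))).and hU)
  exact ⟨r, hr, fun y hy => (h hy).2, fun y hy => (h hy).1.le⟩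

theorem LowerSemicontinuous.exists_forall_le_of_isCompact_sublevel {α β : Type*}
    [TopologicalSpace α] [LinearOrder β] {F : α → β} (hF : LowerSemicontinuous F) (x₀ : α)
    (hS : IsCompact {x | F x ≤ F x₀}) : ∃ x, ∀ z, F x ≤ F z := by
  obtain ⟨x, hxS, hx⟩ :=
    (hF.lowerSemicontinuousOn _).exists_isMinOn ⟨x₀, le_refl (F x₀)⟩ hS
  refine ⟨x, fun z => ?_⟩
  by_cases hz : F z ≤ F x₀
  · exact hx hz
  · exact hxS.trans (not_le.mp hz).le

def IsCoerciveFn {E : Type*} [Norm E] (F : E → EReal) : Prop :=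
  ∀ M : ℝ, ∃ R : ℝ, ∀ x, R ≤ ‖x‖ → (M : EReal) ≤ F x

section Coercive

variable {E : Type*} [NormedAddCommGroup E] {F G : E → EReal}

theorem IsCoerciveFn.add_of_forall_le (hF : IsCoerciveFn F) {m : ℝ}
    (hG : ∀ x, (m : EReal) ≤ G x) : IsCoerciveFn (F + G) := by
  intro M
  obtain ⟨R, hR⟩ := hF (M - m)
  refine ⟨R, fun x hx => ?_⟩
  calc (M : EReal) = ((M - m : ℝ) : EReal) + (m : EReal) := by norm_cast; ring
    _ ≤ F x + G x := add_le_add (hR x hx) (hG x)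

theorem IsCoerciveFn.isBounded_sublevel (hF : IsCoerciveFn F) {c : EReal} (hc : c ≠ ⊤) :
    Bornology.IsBounded {x | F x ≤ c} := by
  obtain ⟨M, hcM, -⟩ := EReal.lt_iff_exists_real_btwn.mp hc.lt_top
  obtain ⟨R, hR⟩ := hF M
  refine (isBounded_ball (x := (0 : E)) (r := R)).subset fun x hx => ?_
  rw [mem_ball_zero_iff]
  by_contra hRx
  exact (hcM.trans_le (hR x (not_lt.mp hRx))).not_ge hx

theorem IsCoerciveFn.exists_forall_le [ProperSpace E] (hF : IsCoerciveFn F)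
    (hlsc : LowerSemicontinuous F) {x₀ : E} (hx₀ : F x₀ ≠ ⊤) : ∃ x, ∀ z, F x ≤ F z :=
  hlsc.exists_forall_le_of_isCompact_sublevel x₀ <|
    isCompact_of_isClosed_isBounded (hlsc.isClosed_preimage (F x₀)) (hF.isBounded_sublevel hx₀)

end Coercive

section Bregman

variable {φ g h : EuclideanSpace ℝ (Fin d) → EReal} {xbar : EuclideanSpace ℝ (Fin d)}

theorem IsConvexFn.le_coe_combo (hφ : IsConvexFn φ) (hbot : ∀ x, φ x ≠ ⊥)
    {x y : EuclideanSpace ℝ (Fin d)} (hx : x ∈ edom φ) (hy : y ∈ edom φ) {a b : ℝ}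
    (ha : 0 ≤ a) (hb : 0 ≤ b) (hab : a + b = 1) :
    φ (a • x + b • y) ≤ ((a * fin φ x + b * fin φ y : ℝ) : EReal) := by
  have := hφ x y a b ha hb hab
  rwa [← EReal.coe_toReal hx (hbot x), ← EReal.coe_toReal hy (hbot y)] at this

theorem IsConvexFn.convex_edom (hφ : IsConvexFn φ) (hbot : ∀ x, φ x ≠ ⊥) :
    Convex ℝ (edom φ) := fun _ hx _ hy _ _ ha hb hab =>
  ((hφ.le_coe_combo hbot hx hy ha hb hab).trans_lt (EReal.coe_lt_top _)).ne

theorem IsConvexFn.convexOn_fin (hφ : IsConvexFn φ) (hbot : ∀ x, φ x ≠ ⊥) :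
    ConvexOn ℝ (edom φ) (fin φ) :=
  ⟨hφ.convex_edom hbot, fun _ hx _ hy _ _ ha hb hab =>
    EReal.toReal_le_toReal (hφ.le_coe_combo hbot hx hy ha hb hab) (hbot _) (EReal.coe_ne_top _)⟩

theorem add_bregmanD_eq (hgbot : ∀ x, g x ≠ ⊥) (hhbot : ∀ x, h x ≠ ⊥)
    {x : EuclideanSpace ℝ (Fin d)} (hx : x ∈ edom g ∩ edom h) :
    g x + bregmanD h x xbar = (((fin g - tangent (fin h) xbar) + fin h) x : ℝ) := by
  rw [bregmanD, ← EReal.coe_toReal hx.1 (hgbot x), ← EReal.coe_toReal hx.2 (hhbot x)]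
  norm_cast
  simp only [Pi.add_apply, Pi.sub_apply, fin, tangent]
  ring

theorem add_bregmanD_ne_top_iff (hgbot : ∀ x, g x ≠ ⊥) (hhbot : ∀ x, h x ≠ ⊥)
    (hDbot : ∀ x, bregmanD h x xbar ≠ ⊥) {x : EuclideanSpace ℝ (Fin d)} :
    g x + bregmanD h x xbar ≠ ⊤ ↔ x ∈ edom g ∩ edom h := by
  refine ⟨fun hF => ⟨fun hgx => hF ?_, fun hhx => hF ?_⟩, fun hx => ?_⟩
  · rw [hgx, EReal.top_add_of_ne_bot (hDbot x)]
  · rw [bregmanD, hhx, EReal.top_sub_coe, EReal.top_sub_coe, EReal.add_top_of_ne_bot (hgbot x)]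
  · rw [add_bregmanD_eq hgbot hhbot hx]
    exact EReal.coe_ne_top _

theorem isMinOn_of_forall_add_bregmanD_le (hgbot : ∀ x, g x ≠ ⊥) (hhbot : ∀ x, h x ≠ ⊥)
    {w : EuclideanSpace ℝ (Fin d)} (hw : w ∈ edom g ∩ edom h)
    (hmin : ∀ z, g w + bregmanD h w xbar ≤ g z + bregmanD h z xbar) :
    IsMinOn ((fin g - tangent (fin h) xbar) + fin h) (edom g ∩ edom h) w := fun z hz => by
  have := hmin z
  rwa [add_bregmanD_eq hgbot hhbot hw, add_bregmanD_eq hgbot hhbot hz,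
    EReal.coe_le_coe_iff] at this

theorem EssentiallySmooth.mem_interior_of_norm_gradient_le (hφ : EssentiallySmooth φ)
    (hconv : Convex ℝ (edom φ)) {x₀ w : EuclideanSpace ℝ (Fin d)}
    (hx₀ : x₀ ∈ interior (edom φ)) (hw : w ∈ edom φ) {B : ℝ}
    (hB : ∀ t : ℝ, 0 < t → t ≤ 1 → ‖∇ (fin φ) (t • x₀ + (1 - t) • w)‖ ≤ B) :
    w ∈ interior (edom φ) := by
  by_contra hw_int
  set t : ℕ → ℝ := fun k => 1 / ((k : ℝ) + 1)
  have ht₀ : ∀ k, 0 < t k := fun k => by positivity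
  have ht₁ : ∀ k, t k ≤ 1 := fun k => div_le_one_of_le₀ (by simp) (by positivity)
  have hseq : ∀ k, t k • x₀ + (1 - t k) • w ∈ interior (edom φ) := fun k =>
    hconv.combo_interior_closure_mem_interior hx₀ (subset_closure hw) (ht₀ k)
      (by linarith [ht₁ k]) (by ring)
  have hlim : Tendsto (fun k => t k • x₀ + (1 - t k) • w) atTop (𝓝 w) := by
    have ht : Tendsto t atTop (𝓝 0) := tendsto_one_div_add_atTop_nhds_zero_nat
    simpa using (ht.smul_const x₀).add ((tendsto_const_nhds (x := (1 : ℝ)).sub ht).smul_const w)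
  obtain ⟨k, hk⟩ :=
    ((hφ.2.2 _ w hseq hlim ⟨subset_closure hw, hw_int⟩).eventually_gt_atTop B).exists
  exact hk.not_ge (hB _ (ht₀ k) (ht₁ k))

theorem mem_interior_of_forall_add_bregmanD_le (hhbot : ∀ x, h x ≠ ⊥) (hh : IsConvexFn h)
    (hh_smooth : EssentiallySmooth h) (hgbot : ∀ x, g x ≠ ⊥) (hg : IsConvexFn g)
    (hDbot : ∀ x, bregmanD h x xbar ≠ ⊥) {x₀ : EuclideanSpace ℝ (Fin d)}
    (hx₀ : x₀ ∈ interior (edom h) ∩ edom g) {w : EuclideanSpace ℝ (Fin d)}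
    (hmin : ∀ z, g w + bregmanD h w xbar ≤ g z + bregmanD h z xbar) :
    w ∈ interior (edom h) ∩ edom g := by
  set ψ := fin g - tangent (fin h) xbar
  have hx₀S : x₀ ∈ edom g ∩ edom h := ⟨hx₀.2, interior_subset hx₀.1⟩
  have hwS : w ∈ edom g ∩ edom h := (add_bregmanD_ne_top_iff hgbot hhbot hDbot).mp <|
    ne_top_of_le_ne_top ((add_bregmanD_ne_top_iff hgbot hhbot hDbot).mpr hx₀S) (hmin x₀)
  have hS : Convex ℝ (edom g ∩ edom h) := (hg.convex_edom hgbot).inter (hh.convex_edom hhbot)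
  have hψ : ConvexOn ℝ (edom g ∩ edom h) ψ :=
    ((hg.convexOn_fin hgbot).subset inter_subset_left hS).sub (concaveOn_tangent _ _ hS)
  have hf := hh.convexOn_fin hhbot
  obtain ⟨r, hr, hball, hM⟩ := exists_closedBall_subset_forall_le
    (hf.continuousOn_interior.continuousAt (isOpen_interior.mem_nhds hx₀.1))
    (isOpen_interior.mem_nhds hx₀.1)
  refine ⟨hh_smooth.mem_interior_of_norm_gradient_le hf.1 hx₀.1 hwS.2
    (B := (fin h x₀ + 1 - fin h w + (ψ x₀ - ψ w)) / r) fun t ht₀ ht₁ => ?_, hwS.1⟩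
  have hp : t • x₀ + (1 - t) • w ∈ interior (edom h) :=
    hf.1.combo_interior_closure_mem_interior hx₀.1 (subset_closure hwS.2) ht₀
      (by linarith) (by ring)
  rw [le_div_iff₀ hr, mul_comm]
  exact hf.mul_norm_gradient_le hr.le (hball.trans interior_subset) hM hwS.2 ht₀ ht₁
    (hh_smooth.2.1 _ hp) (hψ.sub_mul_le_of_isMinOn
      (isMinOn_of_forall_add_bregmanD_le hgbot hhbot hwS hmin) hwS hx₀S ht₀.le ht₁)

theorem eq_of_forall_add_bregmanD_le (hhbot : ∀ x, h x ≠ ⊥) (hh : IsConvexFn h)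
    (hh_strict : StrictConvexOn ℝ (interior (edom h)) (fin h)) (hgbot : ∀ x, g x ≠ ⊥)
    (hg : IsConvexFn g) {w₁ w₂ : EuclideanSpace ℝ (Fin d)}
    (hw₁ : w₁ ∈ interior (edom h) ∩ edom g) (hw₂ : w₂ ∈ interior (edom h) ∩ edom g)
    (hmin₁ : ∀ z, g w₁ + bregmanD h w₁ xbar ≤ g z + bregmanD h z xbar)
    (hmin₂ : ∀ z, g w₂ + bregmanD h w₂ xbar ≤ g z + bregmanD h z xbar) : w₁ = w₂ := by
  have hsub : interior (edom h) ∩ edom g ⊆ edom g ∩ edom h :=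
    fun x hx => ⟨hx.2, interior_subset hx.1⟩
  have hT : Convex ℝ (interior (edom h) ∩ edom g) :=
    (hh.convex_edom hhbot).interior.inter (hg.convex_edom hgbot)
  have hΦ : StrictConvexOn ℝ (interior (edom h) ∩ edom g)
      ((fin g - tangent (fin h) xbar) + fin h) :=
    (((hg.convexOn_fin hgbot).subset (fun x hx => hx.2) hT).sub
      (concaveOn_tangent _ _ hT)).add_strictConvexOn (hh_strict.subset inter_subset_left hT)
  exact hΦ.eq_of_isMinOn
    ((isMinOn_of_forall_add_bregmanD_le hgbot hhbot (hsub hw₁) hmin₁).on_subset hsub)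
    ((isMinOn_of_forall_add_bregmanD_le hgbot hhbot (hsub hw₂) hmin₂).on_subset hsub) hw₁ hw₂

end Bregman

theorem bregman_prox_well_defined_general
    (h g : EuclideanSpace ℝ (Fin d) → EReal)
    (hh_prop : ∀ x, h x ≠ ⊥)
    (hh_conv : IsConvexFn h) (hh_leg : LegendreType h)
    (hg_prop : (∀ x, g x ≠ ⊥) ∧ (edom g).Nonempty)
    (hg_closed : LowerSemicontinuous g) (hg_conv : IsConvexFn g)
    (hdom : (interior (edom h) ∩ edom g).Nonempty)
    (xbar : EuclideanSpace ℝ (Fin d))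
    (hg_coercive : ∀ M : ℝ, ∃ R : ℝ, ∀ x, R ≤ ‖x‖ → (M : EReal) ≤ g x)
    (hD_prop : (∀ x, bregmanD h x xbar ≠ ⊥) ∧ {x | bregmanD h x xbar ≠ ⊤}.Nonempty)
    (hD_closed : LowerSemicontinuous (fun x => bregmanD h x xbar))
    (hD_bdd : ∃ m : ℝ, ∀ x, (m : EReal) ≤ bregmanD h x xbar) :
    ∃ xplus : EuclideanSpace ℝ (Fin d),
      (∀ x, g xplus + bregmanD h xplus xbar ≤ g x + bregmanD h x xbar) ∧
      xplus ∈ interior (edom h) ∩ edom g ∧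
      (∀ x, (∀ z, g x + bregmanD h x xbar ≤ g z + bregmanD h z xbar) → x = xplus) := by
  obtain ⟨x₀, hx₀⟩ := hdom
  obtain ⟨m, hm⟩ := hD_bdd
  have hF_lsc : LowerSemicontinuous fun x => g x + bregmanD h x xbar :=
    hg_closed.add' hD_closed fun x =>
      EReal.continuousAt_add (Or.inr (hD_prop.1 x)) (Or.inl (hg_prop.1 x))
  have hF_coercive : IsCoerciveFn (g + fun x => bregmanD h x xbar) :=
    IsCoerciveFn.add_of_forall_le hg_coercive hm
  obtain ⟨xplus, hmin⟩ := hF_coercive.exists_forall_le hF_lsc (x₀ := x₀)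
    ((add_bregmanD_ne_top_iff hg_prop.1 hh_prop hD_prop.1).mpr ⟨hx₀.2, interior_subset hx₀.1⟩)
  have hmem : ∀ w, (∀ z, g w + bregmanD h w xbar ≤ g z + bregmanD h z xbar) →
      w ∈ interior (edom h) ∩ edom g := fun w hw =>
    mem_interior_of_forall_add_bregmanD_le hh_prop hh_conv hh_leg.1 hg_prop.1 hg_conv
      hD_prop.1 hx₀ hw
  exact ⟨xplus, hmin, hmem xplus hmin, fun x hx =>
    eq_of_forall_add_bregmanD_le hh_prop hh_conv hh_leg.2 hg_prop.1 hg_conv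
      (hmem x hx) (hmem xplus hmin) hx hmin⟩

/-- Well-definedness of the Bregman proximal operator: under the stated
assumptions, `argmin_x { g(x) + D_h(x, x̄) }` is a singleton contained in
`int dom h ∩ dom g`. -/
theorem bregman_prox_well_defined
    (h g : EuclideanSpace ℝ (Fin d) → EReal)
    (hh_prop : ∀ x, h x ≠ ⊥) (hh_closed : LowerSemicontinuous h)
    (hh_conv : IsConvexFn h) (hh_leg : LegendreType h)
    (hg_prop : (∀ x, g x ≠ ⊥) ∧ (edom g).Nonempty)
    (hg_closed : LowerSemicontinuous g) (hg_conv : IsConvexFn g)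
    (hdom : (interior (edom h) ∩ edom g).Nonempty)
    (xbar : EuclideanSpace ℝ (Fin d)) (hxbar : xbar ∈ interior (edom h))
    (hg_coercive : ∀ M : ℝ, ∃ R : ℝ, ∀ x, R ≤ ‖x‖ → (M : EReal) ≤ g x)
    (hg_bdd : ∃ m : ℝ, ∀ x, (m : EReal) ≤ g x)
    (hD_prop : (∀ x, bregmanD h x xbar ≠ ⊥) ∧ {x | bregmanD h x xbar ≠ ⊤}.Nonempty)
    (hD_closed : LowerSemicontinuous (fun x => bregmanD h x xbar))
    (hD_conv : IsConvexFn (fun x => bregmanD h x xbar))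
    (hD_bdd : ∃ m : ℝ, ∀ x, (m : EReal) ≤ bregmanD h x xbar) :
    ∃ xplus : EuclideanSpace ℝ (Fin d),
      (∀ x, g xplus + bregmanD h xplus xbar ≤ g x + bregmanD h x xbar) ∧
      xplus ∈ interior (edom h) ∩ edom g ∧
      (∀ x, (∀ z, g x + bregmanD h x xbar ≤ g z + bregmanD h z xbar) → x = xplus) :=
  bregman_prox_well_defined_general h g hh_prop hh_conv hh_leg hg_prop hg_closed hg_conv hdom xbar
    hg_coercive hD_prop hD_closed hD_bdd
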